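/- Let $X$ be a standard Borel space with a Borel probability measure $\mu$, let $Y$ be a compact metrizable space, and let $p: Y \to X$ be a Borel map such that $\mu(p(Y)) = 1$ and such that $p^{-1}(x)$ is compact for $\mu$-almost all $x \in X$. Suppose $\nu_1, \nu_2, \nu_3, \ldots$ is a sequence of Borel probability measures on $Y$ with $p_*\nu_n = \mu$ for all $n$, converging in the weak* topology to a Borel probability measure $\nu$. Then $p_*\nu = \mu$. -/

import Mathlib

/-!
It suffices to show `μ s ≤ νlim (p ⁻¹' s)` for Borel `s`, both sides being probability measures.
Fix a countable dense set of points `y` of `Y`. The fiber distances `x ↦ infEDist y (p ⁻¹' {x})`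
have the images of balls under `p` as sublevel sets; these are analytic, hence (by Choquet
capacitability) `μ`-null-measurable, so by Lusin's theorem all the fiber distances are continuous
on a compact set `K ⊆ s` of almost full measure over which the fibers are closed. Continuity of the
fiber distances forces every limit of points of `p ⁻¹' K` into the fiber over the limit of their
images, so `p ⁻¹' K` is closed. Since `νₙ (p ⁻¹' K) = μ K` for all `n`, the portmanteau theorem for
the closed set `p ⁻¹' K` gives `μ K ≤ νlim (p ⁻¹' K)`.
-/

open MeasureTheory Filter Set Topology Metric
open scoped ENNReal

lemma exists_forall_lt_le_subset {n : ℕ → ℕ} {V : Set (ℕ → ℕ)} (hV : IsOpen V)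
    (hnV : univ.pi (fun i => Iic (n i)) ⊆ V) : ∃ k, {α | ∀ i < k, α i ≤ n i} ⊆ V := by
  by_contra! h
  choose α hα hαV using fun k => not_subset.1 (h k)
  obtain ⟨γ, hγ, φ, hφ, hlim⟩ :=
    (isCompact_univ_pi fun i => (finite_Iic (n i)).isCompact).tendsto_subseq
      (x := fun k i => min (α k i) (n i)) fun k i _ => mem_Iic.2 (min_le_right _ _)
  -- `α k` agrees with its truncation below `n` on the coordinates `i < k`
  have hαγ : Tendsto (α ∘ φ) atTop (𝓝 γ) := by
    refine tendsto_pi_nhds.2 fun i => (tendsto_pi_nhds.1 hlim i).congr' ?_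
    filter_upwards [hφ.tendsto_atTop.eventually_gt_atTop i] with j hj
    exact min_eq_left (hα (φ j) i hj)
  obtain ⟨j, hj⟩ := (hαγ.eventually (hV.mem_nhds (hnV hγ))).exists
  exact hαV (φ j) hj

lemma MeasureTheory.AnalyticSet.exists_isCompact_lt_measure {α : Type*} [TopologicalSpace α]
    [MeasurableSpace α] {μ : Measure α} [μ.OuterRegular] {A : Set α} (hA : AnalyticSet A)
    {c : ℝ≥0∞} (hc : c < μ A) :
    ∃ K ⊆ A, IsCompact K ∧ c < μ K := by
  obtain ⟨c', hcc', hc'A⟩ := exists_between hc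
  rcases (AnalyticSet_def A ▸ hA : A = ∅ ∨ _) with rfl | ⟨f, hf, rfl⟩
  · simp at hc
  have step : ∀ (S : Set (ℕ → ℕ)) (k : ℕ),
      ∃ m, c' < μ (f '' S) → c' < μ (f '' (S ∩ {α | α k ≤ m})) := by
    intro S k
    have hmono : Monotone fun m => f '' (S ∩ {α | α k ≤ m}) :=
      fun m m' hm => image_mono (inter_subset_inter_right _ fun α hα => le_trans hα hm)
    have hS : f '' S = ⋃ m, f '' (S ∩ {α | α k ≤ m}) := by
      rw [← image_iUnion, ← inter_iUnion,
        iUnion_eq_univ_iff.2 fun α => ⟨α k, le_refl (α k)⟩, inter_univ]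
    by_cases hcS : c' < μ (f '' S)
    · rw [hS, hmono.measure_iUnion] at hcS
      exact (lt_iSup_iff.1 hcS).imp fun m hm _ => hm
    · exact ⟨0, fun h => absurd h hcS⟩
  -- bound the coordinates one at a time, keeping the outer measure of the image above `c'`
  choose m hm using step
  let T : ℕ → Set (ℕ → ℕ) := fun k => Nat.rec univ (fun k S => S ∩ {α | α k ≤ m S k}) k
  let n : ℕ → ℕ := fun k => m (T k) k
  have hT : ∀ k, T k = {α | ∀ i < k, α i ≤ n i} := by
    intro k
    induction k with
    | zero => simp [T]
    | succ k ih =>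
      change T k ∩ {α | α k ≤ n k} = _
      ext α
      simp [ih, Nat.le_iff_lt_or_eq, or_imp, forall_and]
  have hTμ : ∀ k, c' < μ (f '' T k) := by
    intro k
    induction k with
    | zero => simpa [T] using hc'A
    | succ k ih => exact hm _ _ ih
  have hC : IsCompact (univ.pi fun i => Iic (n i)) :=
    isCompact_univ_pi fun i => (finite_Iic (n i)).isCompact
  refine ⟨f '' univ.pi fun i => Iic (n i), image_subset_range _ _, hC.image hf,
    hcc'.trans_le (not_lt.1 fun hlt => ?_)⟩
  obtain ⟨U, hCU, hU, hUμ⟩ := Set.exists_isOpen_lt_of_lt _ c' hlt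
  obtain ⟨k, hk⟩ := exists_forall_lt_le_subset (hU.preimage hf) (image_subset_iff.1 hCU)
  rw [← hT] at hk
  exact (hTμ k).not_ge ((measure_mono (image_subset_iff.2 hk)).trans hUμ.le)

lemma MeasureTheory.AnalyticSet.nullMeasurableSet {α : Type*} [TopologicalSpace α] [T2Space α]
    [MeasurableSpace α] [OpensMeasurableSpace α] {μ : Measure α} [IsFiniteMeasure μ]
    [μ.OuterRegular] {A : Set α} (hA : AnalyticSet A) : NullMeasurableSet A μ := by
  rcases eq_zero_or_pos (μ A) with hA0 | hA0
  · exact .of_null hA0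
  obtain ⟨c, -, hc, hlim⟩ := exists_seq_strictMono_tendsto' hA0
  choose K hKA hK hcK using fun j => hA.exists_isCompact_lt_measure (hc j).2
  have hB : MeasurableSet (⋃ j, K j) := .iUnion fun j => (hK j).measurableSet
  have hμB : μ A ≤ μ (⋃ j, K j) :=
    le_of_tendsto' hlim fun j => (hcK j).le.trans (measure_mono (subset_iUnion K j))
  exact hB.nullMeasurableSet.congr <|
    ae_eq_of_subset_of_measure_ge (iUnion_subset hKA) hμB hB.nullMeasurableSet (measure_ne_top μ A)

section Lusin

variable {X : Type*} [TopologicalSpace X] [T2Space X] [MeasurableSpace X] [OpensMeasurableSpace X]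
  {μ : Measure X} [IsFiniteMeasure μ] [μ.InnerRegularCompactLTTop]

lemma MeasurableSet.exists_isCompact_subset_isCompact_subset_compl {E : Set X}
    (hE : MeasurableSet E) {δ : ℝ≥0∞} (hδ : δ ≠ 0) :
    ∃ F G, F ⊆ E ∧ G ⊆ Eᶜ ∧ IsCompact F ∧ IsCompact G ∧ μ (F ∪ G)ᶜ < δ := by
  obtain ⟨F, hFE, hF, hEF⟩ :=
    hE.exists_isCompact_sdiff_lt (measure_ne_top μ E) (ENNReal.half_pos hδ).ne'
  obtain ⟨G, hGE, hG, hEG⟩ :=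
    hE.compl.exists_isCompact_sdiff_lt (measure_ne_top μ Eᶜ) (ENNReal.half_pos hδ).ne'
  refine ⟨F, G, hFE, hGE, hF, hG, ?_⟩
  have hsub : (F ∪ G)ᶜ ⊆ (E \ F) ∪ (Eᶜ \ G) := by
    intro x hx
    by_cases hxE : x ∈ E
    exacts [.inl ⟨hxE, fun h => hx (.inl h)⟩, .inr ⟨hxE, fun h => hx (.inr h)⟩]
  calc μ (F ∪ G)ᶜ ≤ μ (E \ F) + μ (Eᶜ \ G) := (measure_mono hsub).trans (measure_union_le _ _)
    _ < δ / 2 + δ / 2 := ENNReal.add_lt_add hEF hEG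
    _ = δ := ENNReal.add_halves δ

variable {Z : Type*} [TopologicalSpace Z] [SecondCountableTopology Z] [MeasurableSpace Z]
  [OpensMeasurableSpace Z]

lemma Measurable.exists_isCompact_sdiff_lt_continuousOn {f : X → Z} (hf : Measurable f)
    {s : Set X} (hs : MeasurableSet s) {ε : ℝ≥0∞} (hε : ε ≠ 0) :
    ∃ K ⊆ s, IsCompact K ∧ μ (s \ K) < ε ∧ ContinuousOn f K := by
  let B := TopologicalSpace.countableBasis Z
  have : Countable B := (TopologicalSpace.countable_countableBasis Z).to_subtype
  obtain ⟨δ, hδ, hδε⟩ := ENNReal.exists_pos_sum_of_countable (ENNReal.half_pos hε).ne' B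
  choose F G hF hG hFc hGc hFG using fun V : B =>
    (hf (TopologicalSpace.isOpen_of_mem_countableBasis V.2).measurableSet
      ).exists_isCompact_subset_isCompact_subset_compl (μ := μ)
      (ENNReal.coe_ne_zero.2 (hδ V).ne')
  obtain ⟨K₀, hK₀s, hK₀, hsK₀⟩ :=
    hs.exists_isCompact_sdiff_lt (measure_ne_top μ s) (ENNReal.half_pos hε).ne'
  -- on `⋂ V, F V ∪ G V`, the preimage of a basic open set `V` is cut out by the open set `(G V)ᶜ`
  let C := ⋂ V, F V ∪ G V
  refine ⟨K₀ ∩ C, inter_subset_left.trans hK₀s,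
    hK₀.inter_right (isClosed_iInter fun V => ((hFc V).union (hGc V)).isClosed), ?_, ?_⟩
  · calc μ (s \ (K₀ ∩ C)) ≤ μ (s \ K₀) + μ Cᶜ := by
          rw [sdiff_inter]
          exact (measure_union_le _ _).trans (by gcongr; exact sdiff_subset_compl _ _)
      _ < ε / 2 + ε / 2 := by
          refine ENNReal.add_lt_add hsK₀ ?_
          rw [compl_iInter]
          exact (measure_iUnion_le _).trans_lt
            ((ENNReal.tsum_le_tsum fun V => (hFG V).le).trans_lt hδε)
      _ = ε := ENNReal.add_halves ε
  · rw [continuousOn_iff_continuous_domRestrict,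
      (TopologicalSpace.isBasis_countableBasis Z).continuous_iff]
    intro V hV
    convert (hGc ⟨V, hV⟩).isClosed.isOpen_compl.preimage continuous_subtype_val using 1
    ext ⟨x, hx⟩
    have hxV := mem_iInter.1 hx.2 ⟨V, hV⟩
    simp only [mem_preimage, domRestrict_apply, mem_compl_iff]
    exact ⟨fun h hxG => hG _ hxG h, fun h => hF _ (hxV.resolve_right h)⟩

lemma AEMeasurable.exists_isCompact_sdiff_lt_continuousOn {f : X → Z} (hf : AEMeasurable f μ)
    {P : X → Prop} (hP : ∀ᵐ x ∂μ, P x) {s : Set X} (hs : MeasurableSet s) {ε : ℝ≥0∞}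
    (hε : ε ≠ 0) :
    ∃ K ⊆ s, IsCompact K ∧ μ (s \ K) < ε ∧ (∀ x ∈ K, P x) ∧ ContinuousOn f K := by
  let N := toMeasurable μ {x | ¬(P x ∧ f x = hf.mk f x)}
  have hN : μ N = 0 := by
    rw [measure_toMeasurable]
    exact ae_iff.1 (hP.and hf.ae_eq_mk)
  obtain ⟨K, hKs, hK, hsK, hcont⟩ :=
    hf.measurable_mk.exists_isCompact_sdiff_lt_continuousOn (μ := μ)
      (hs.diff (measurableSet_toMeasurable μ _)) hε
  have hgood : ∀ x ∈ K, P x ∧ f x = hf.mk f x := fun x hx =>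
    by_contra fun h => (hKs hx).2 (subset_toMeasurable μ _ h)
  refine ⟨K, hKs.trans sdiff_subset, hK, ?_, fun x hx => (hgood x hx).1,
    hcont.congr fun x hx => (hgood x hx).2⟩
  rwa [← measure_sdiff_null hN, sdiff_sdiff_comm]

end Lusin

section Fibers

variable {X Y : Type*} [TopologicalSpace X] [PseudoEMetricSpace Y] {p : Y → X}

lemma apply_eq_of_tendsto_of_continuousOn_infEDist {s : Set Y} (hs : Dense s) {K : Set X}
    (hcont : ∀ y ∈ s, ContinuousOn (fun x => infEDist y (p ⁻¹' {x})) K) {u : ℕ → Y} {b : Y}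
    {x : X} (hub : Tendsto u atTop (𝓝 b)) (huK : ∀ j, p (u j) ∈ K)
    (hpu : Tendsto (p ∘ u) atTop (𝓝 x)) (hx : x ∈ K) (hfib : IsClosed (p ⁻¹' {x})) :
    p b = x := by
  have hle : ∀ y ∈ s, infEDist y (p ⁻¹' {x}) ≤ edist y b := fun y hy =>
    le_of_tendsto_of_tendsto
      ((hcont y hy x hx).tendsto.comp (tendsto_nhdsWithin_iff.2 ⟨hpu, .of_forall huK⟩))
      (tendsto_const_nhds.edist hub) (.of_forall fun j => infEDist_le_edist_of_mem rfl)
  have hb : infEDist b (p ⁻¹' {x}) = 0 := by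
    have := le_on_closure hle continuous_infEDist.continuousOn
      (continuous_id.edist continuous_const).continuousOn (hs.closure_eq ▸ mem_univ b)
    rwa [edist_self, nonpos_iff_eq_zero] at this
  exact hfib.closure_subset (mem_closure_iff_infEDist_zero.2 hb)

lemma isClosed_preimage_of_continuousOn_infEDist [FirstCountableTopology X] {s : Set Y}
    (hs : Dense s) {K : Set X} (hK : IsCompact K) (hfib : ∀ x ∈ K, IsClosed (p ⁻¹' {x}))
    (hcont : ∀ y ∈ s, ContinuousOn (fun x => infEDist y (p ⁻¹' {x})) K) :
    IsClosed (p ⁻¹' K) := by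
  refine IsSeqClosed.isClosed fun u b hu hub => ?_
  obtain ⟨x, hx, φ, hφ, hpu⟩ := hK.tendsto_subseq hu
  rwa [mem_preimage, apply_eq_of_tendsto_of_continuousOn_infEDist hs hcont
    (hub.comp hφ.tendsto_atTop) (fun j => hu (φ j)) hpu hx (hfib x hx)]

variable [PolishSpace X] [MeasurableSpace X] [BorelSpace X] [MeasurableSpace Y]
  [StandardBorelSpace Y] [OpensMeasurableSpace Y] {μ : Measure X} [IsFiniteMeasure μ]

lemma aemeasurable_infEDist_preimage_singleton (hp : Measurable p) (y : Y) :
    AEMeasurable (fun x => infEDist y (p ⁻¹' {x})) μ := by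
  refine NullMeasurable.aemeasurable (measurable_of_Iio fun r => ?_)
  have hball : (fun x => infEDist y (p ⁻¹' {x})) ⁻¹' Iio r = p '' eball y r := by
    ext x
    simp [infEDist_lt_iff, edist_comm, and_comm]
  change NullMeasurableSet ((fun x : X => infEDist y (p ⁻¹' {x})) ⁻¹' Iio r) μ
  rw [hball]
  exact (isOpen_eball.measurableSet.analyticSet_image hp).nullMeasurableSet

lemma exists_isCompact_sdiff_lt_isClosed_preimage [TopologicalSpace.SeparableSpace Y]
    (hp : Measurable p) (hfib : ∀ᵐ x ∂μ, IsClosed (p ⁻¹' {x})) {s : Set X}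
    (hs : MeasurableSet s) {ε : ℝ≥0∞} (hε : ε ≠ 0) : ∃ K ⊆ s, IsCompact K ∧ μ (s \ K) < ε ∧ IsClosed (p ⁻¹' K) := by
  obtain ⟨S, hSc, hSd⟩ := TopologicalSpace.exists_countable_dense Y
  have := hSc.to_subtype
  have hD : AEMeasurable (fun x (y : S) => infEDist (y : Y) (p ⁻¹' {x})) μ :=
    aemeasurable_pi_lambda _ fun y => aemeasurable_infEDist_preimage_singleton hp y
  obtain ⟨K, hKs, hK, hsK, hfibK, hDK⟩ := hD.exists_isCompact_sdiff_lt_continuousOn hfib hs hε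
  exact ⟨K, hKs, hK, hsK, isClosed_preimage_of_continuousOn_infEDist hSd hK hfibK
    fun y hy => continuousOn_pi.1 hDK ⟨y, hy⟩⟩

end Fibers

theorem map_eq_of_tendsto_of_map_eq {X : Type*} [TopologicalSpace X] [PolishSpace X]
    [MeasurableSpace X] [BorelSpace X] {μ : Measure X} [IsProbabilityMeasure μ]
    {Y : Type*} [PseudoEMetricSpace Y] [TopologicalSpace.SeparableSpace Y] [MeasurableSpace Y]
    [StandardBorelSpace Y] [OpensMeasurableSpace Y] {p : Y → X} (hp : Measurable p)
    (hfib : ∀ᵐ x ∂μ, IsClosed (p ⁻¹' {x})) {ν : ℕ → ProbabilityMeasure Y}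
    (hν : ∀ n, (ν n).toMeasure.map p = μ) {νlim : ProbabilityMeasure Y}
    (hlim : Tendsto ν atTop (𝓝 νlim)) :
    νlim.toMeasure.map p = μ := by
  have := Measure.isProbabilityMeasure_map (μ := νlim.toMeasure) hp.aemeasurable
  refine (Measure.eq_of_le_of_isProbabilityMeasure (Measure.le_intro fun s hs _ => ?_)).symm
  rw [Measure.map_apply hp hs]
  refine ENNReal.le_of_forall_pos_le_add fun ε hε _ => ?_
  obtain ⟨K, hKs, hK, hsK, hpK⟩ :=
    exists_isCompact_sdiff_lt_isClosed_preimage hp hfib hs (ENNReal.coe_ne_zero.2 hε.ne')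
  have hνK : ∀ n, (ν n : Measure Y) (p ⁻¹' K) = μ K := fun n => by
    rw [← Measure.map_apply hp hK.measurableSet, hν n]
  calc μ s ≤ μ K + ε := by
        rw [← tsub_le_iff_left]
        exact le_measure_sdiff.trans hsK.le
    _ = atTop.limsup (fun n => (ν n : Measure Y) (p ⁻¹' K)) + ε := by simp [hνK]
    _ ≤ (νlim : Measure Y) (p ⁻¹' K) + ε := by
        gcongr
        exact ProbabilityMeasure.limsup_measure_closed_le_of_tendsto hlim hpK
    _ ≤ (νlim : Measure Y) (p ⁻¹' s) + ε := by gcongr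

theorem map_limit_eq_of_map_eq_general
    {X : Type*} [MeasurableSpace X] [StandardBorelSpace X]
    (μ : Measure X) [IsProbabilityMeasure μ]
    {Y : Type*} [TopologicalSpace Y] [CompactSpace Y] [TopologicalSpace.MetrizableSpace Y]
    [MeasurableSpace Y] [BorelSpace Y]
    (p : Y → X) (hp : Measurable p)
    (hfib : ∀ᵐ x ∂μ, IsCompact (p ⁻¹' {x}))
    (ν : ℕ → ProbabilityMeasure Y) (hν : ∀ n, (ν n).toMeasure.map p = μ)
    (νlim : ProbabilityMeasure Y) (hlim : Tendsto ν atTop (nhds νlim)) :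
    νlim.toMeasure.map p = μ := by
  let := upgradeStandardBorel X
  let := TopologicalSpace.metrizableSpaceMetric Y
  exact map_eq_of_tendsto_of_map_eq hp (hfib.mono fun _ h => h.isClosed) hν hlim

/-- Closedness part of Lemma 3.1 (compact case): if `Y` is compact metrizable, `X` a standard
Borel space with Borel probability measure `μ`, `p : Y → X` Borel with `μ (range p) = 1` and
`μ`-a.e. compact fibers, and `ν n` is a sequence of Borel probability measures on `Y` with
`p_* (ν n) = μ` converging weakly (in the weak* topology on `P(Y)`) to `νlim`, then
`p_* νlim = μ`. -/
theorem map_limit_eq_of_map_eq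
    {X : Type*} [MeasurableSpace X] [StandardBorelSpace X]
    (μ : Measure X) [IsProbabilityMeasure μ]
    {Y : Type*} [TopologicalSpace Y] [CompactSpace Y] [TopologicalSpace.MetrizableSpace Y]
    [MeasurableSpace Y] [BorelSpace Y]
    (p : Y → X) (hp : Measurable p)
    (hfull : μ (Set.range p) = 1)
    (hfib : ∀ᵐ x ∂μ, IsCompact (p ⁻¹' {x}))
    (ν : ℕ → ProbabilityMeasure Y) (hν : ∀ n, (ν n).toMeasure.map p = μ)
    (νlim : ProbabilityMeasure Y) (hlim : Tendsto ν atTop (nhds νlim)) :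
    νlim.toMeasure.map p = μ :=
  map_limit_eq_of_map_eq_general μ p hp hfib ν hν νlim hlim
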